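/- Let B be a skew brace of nilpotent type (with (B,+) nilpotent of class m) such that B³ = 0 and the multiplicative group (B,·) is abelian. Then B^{(2+m+1)} = 0. -/

import Mathlib

/-- A (left) skew brace: a set with two group structures `(B,+)` and `(B,·)`
satisfying `a·(b+c) = a·b - a + a·c`. -/
class SkewBrace (B : Type*) extends AddGroup B, Group B where
  mul_add_compat : ∀ a b c : B, a * (b + c) = a * b - a + a * c

namespace SkewBrace

variable {B : Type*} [SkewBrace B]

/-- The star product `a ∗ b = -a + a·b - b`. -/
def star (a b : B) : B := -a + a * b - b

/-- For subsets `X, Y ⊆ B`, `X ∗ Y` is the additive subgroup generated by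
all `x ∗ y` with `x ∈ X`, `y ∈ Y`. -/
def starSet (X Y : Set B) : AddSubgroup B :=
  AddSubgroup.closure (Set.image2 star X Y)

/-- The left series, indexed so that `leftSeries B n = B^{n+1}`:
`leftSeries B 0 = B¹ = B` and `leftSeries B (n+1) = B ∗ leftSeries B n`. -/
def leftSeries (B : Type*) [SkewBrace B] : ℕ → AddSubgroup B
  | 0 => ⊤
  | n + 1 => starSet Set.univ (leftSeries B n)

/-- The right series, indexed so that `rightSeries B n = B^{(n+1)}`:
`rightSeries B 0 = B^{(1)} = B` and `rightSeries B (n+1) = (rightSeries B n) ∗ B`. -/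
def rightSeries (B : Type*) [SkewBrace B] : ℕ → AddSubgroup B
  | 0 => ⊤
  | n + 1 => starSet (rightSeries B n : Set B) Set.univ

end SkewBrace

/-!
Since `B³ = 0`, every `x ∈ B²` satisfies `b * x = b + x`; as `(B,·)` is abelian, also
`x * b = b + x`, so `x ∗ b = -x + b + x - b` is an additive commutator. All terms of the right
series after the first lie in `B²`, so inductively `B^{(k+1)}` lies in the `k`-th term (counted
from `0`) of the lower central series of `(B,+)`. Hence `B^{(m+1)} = 0`, and then `B^{(m+2)} = 0`.
-/

namespace SkewBrace

open scoped commutatorElement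

variable {B : Type*} [SkewBrace B]

theorem zero_eq_one : (0 : B) = 1 := by
  have h := mul_add_compat (1 : B) 0 0
  simp only [add_zero, one_mul, zero_sub] at h
  exact (neg_eq_zero.mp h.symm).symm

theorem star_zero_left (b : B) : star (0 : B) b = 0 := by
  rw [star, zero_eq_one, one_mul, ← zero_eq_one, neg_zero, zero_add, sub_self]

theorem star_mem_leftSeries_one (a b : B) : star a b ∈ leftSeries B 1 :=
  AddSubgroup.subset_closure ⟨a, trivial, b, trivial, rfl⟩

theorem rightSeries_succ_le_leftSeries_one (n : ℕ) : rightSeries B (n + 1) ≤ leftSeries B 1 :=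
  (AddSubgroup.closure_le _).mpr <| by
    rintro _ ⟨a, -, b, -, rfl⟩
    exact star_mem_leftSeries_one a b

theorem rightSeries_succ_eq_bot {n : ℕ} (h : rightSeries B n = ⊥) : rightSeries B (n + 1) = ⊥ :=
  le_bot_iff.mp <| (AddSubgroup.closure_le _).mpr <| by
    rintro _ ⟨x, hx, b, -, rfl⟩
    rw [h, AddSubgroup.coe_bot, Set.mem_singleton_iff] at hx
    rw [hx, star_zero_left]
    exact zero_mem _

theorem mul_eq_add_of_mem_leftSeries_one (h3 : leftSeries B 2 = ⊥) (b : B) {x : B}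
    (hx : x ∈ leftSeries B 1) : b * x = b + x := by
  have hstar : star b x ∈ leftSeries B 2 := AddSubgroup.subset_closure ⟨b, trivial, x, hx, rfl⟩
  rw [h3, AddSubgroup.mem_bot, star, sub_eq_zero, neg_add_eq_iff_eq_add] at hstar
  exact hstar

theorem ofAdd_star_eq_commutator (h3 : leftSeries B 2 = ⊥) (hcomm : ∀ a b : B, a * b = b * a)
    {x : B} (hx : x ∈ leftSeries B 1) (b : B) :
    Multiplicative.ofAdd (star x b) = ⁅(Multiplicative.ofAdd x)⁻¹, Multiplicative.ofAdd b⁆ := by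
  rw [star, hcomm, mul_eq_add_of_mem_leftSeries_one h3 b hx, commutatorElement_def, inv_inv,
    sub_eq_add_neg, ← add_assoc]
  rfl

theorem rightSeries_succ_le_lowerCentralSeries (h3 : leftSeries B 2 = ⊥)
    (hcomm : ∀ a b : B, a * b = b * a) (k : ℕ) :
    rightSeries B (k + 1) ≤
      ((⊤ : Subgroup (Multiplicative B)).lowerCentralSeries k).toAddSubgroup' := by
  induction k with
  | zero => exact fun _ _ ↦ Subgroup.mem_top _
  | succ k ih =>
    refine (AddSubgroup.closure_le _).mpr ?_
    rintro _ ⟨x, hx, b, -, rfl⟩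
    change Multiplicative.ofAdd (star x b) ∈
      (⊤ : Subgroup (Multiplicative B)).lowerCentralSeries (k + 1)
    rw [ofAdd_star_eq_commutator h3 hcomm (rightSeries_succ_le_leftSeries_one k hx),
      Subgroup.lowerCentralSeries_succ]
    exact Subgroup.commutator_mem_commutator (inv_mem (ih hx)) (Subgroup.mem_top _)

end SkewBrace

open SkewBrace in
/-- If `B` is of nilpotent type with `(B,+)` of class `m`, `B³ = 0` and `(B,·)` is abelian,
then `B^{(2+m+1)} = 0`, i.e. `rightSeries B (2 + m) = ⊥`. -/
theorem right_nilpotent_of_abelian_mul (B : Type*) [SkewBrace B] (m : ℕ)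
    [Group.IsNilpotent (Multiplicative B)]
    (hm : Group.nilpotencyClass (Multiplicative B) = m)
    (h3 : leftSeries B 2 = ⊥)
    (hcomm : ∀ a b : B, a * b = b * a) :
    rightSeries B (2 + m) = ⊥ := by
  have hlcs : (⊤ : Subgroup (Multiplicative B)).lowerCentralSeries m = ⊥ :=
    hm ▸ Subgroup.lowerCentralSeries_nilpotencyClass
  have hRm : rightSeries B (m + 1) = ⊥ := by
    simpa [hlcs] using rightSeries_succ_le_lowerCentralSeries h3 hcomm m
  rw [add_comm]
  exact rightSeries_succ_eq_bot hRm
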